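/- Let K ≥ 1, let (Z_i, Y_i) for i = 1, …, K+1 be random variables taking values in a measurable space E × ℝ whose joint distribution is exchangeable, and let μ_lo, μ_hi : E → ℝ be fixed measurable functions. Define the non-conformity scores v_i = max(μ_lo(Z_i) − Y_i, Y_i − μ_hi(Z_i)). Fix α ∈ (0,1) with ⌈(K+1)(1−α)⌉ ≤ K, and let q̂ be the ⌈(K+1)(1−α)⌉-th order statistic of v_1, …, v_K. Then ℙ( μ_lo(Z_{K+1}) − q̂ ≤ Y_{K+1} and Y_{K+1} ≤ μ_hi(Z_{K+1}) + q̂ ) ≥ 1 − α. -/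

import Mathlib

/-!
Let `t = ⌈(K+1)(1-α)⌉` and call the rank of a score the number of scores (among all `K+1`)
strictly below it. The test edge is covered iff its score `v_{K+1}` is at most the `t`-th
smallest calibration score, i.e. iff fewer than `t` calibration scores lie strictly below
`v_{K+1}`, i.e. iff the rank of `v_{K+1}` is at most `t - 1`. Deterministically at least `t`
of the `K+1` indices have rank at most `t - 1` (ties only help), and by exchangeability each
index has the same probability of this, so it has probability at least `t/(K+1) ≥ 1 - α`.
-/

open MeasureTheory
open scoped ENNReal

/-- The `t`-th smallest value (0-indexed) among `w 0, …, w (K-1)`. -/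
noncomputable def orderStat {K : ℕ} (w : Fin K → ℝ) (t : Fin K) : ℝ :=
  w (Tuple.sort w t)

open Finset

section Counting

variable {ι α : Type*} [Fintype ι] [LinearOrder α]

def countLT (w : ι → α) (x : α) : ℕ := #{j | w j < x}

lemma countLT_mono (w : ι → α) : Monotone (countLT w) := fun _ _ hxy =>
  card_le_card <| monotone_filter_right _ fun _ _ h => h.trans_le hxy

lemma countLT_comp_perm (w : ι → α) (σ : Equiv.Perm ι) (x : α) :
    countLT (w ∘ σ) x = countLT w x :=
  card_bij' (fun j _ => σ j) (fun j _ => σ.symm j) (by simp) (by simp) (by simp) (by simp)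

end Counting

lemma le_orderStat_iff {K : ℕ} (w : Fin K → ℝ) (t : Fin K) (x : ℝ) :
    x ≤ orderStat w t ↔ countLT w x ≤ t := by
  constructor
  · intro hx
    have hsub : (univ.filter (fun i => w i < x)).map (Tuple.sort w).symm.toEmbedding ⊆ Iio t := by
      intro j hj
      simp only [mem_map_equiv, Equiv.symm_symm, mem_filter, mem_univ, true_and] at hj
      refine mem_Iio.2 (lt_of_not_ge fun htj => hj.not_ge (hx.trans ?_))
      exact Tuple.monotone_sort w htj
    simpa [countLT, Fin.card_Iio] using card_le_card hsub
  · intro hcount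
    by_contra! hlt
    have hsub : (Iic t).map (Tuple.sort w).toEmbedding ⊆ univ.filter (fun i => w i < x) := by
      intro i hi
      simp only [mem_map_equiv, mem_Iic] at hi
      simpa using (Tuple.monotone_sort w hi).trans_lt hlt
    have := card_le_card hsub
    simp only [card_map, Fin.card_Iic] at this
    exact absurd (this.trans hcount) (by omega)

lemma le_orderStat_castSucc_iff {K : ℕ} (w : Fin (K + 1) → ℝ) (t : Fin K) :
    w (Fin.last K) ≤ orderStat (fun i => w i.castSucc) t ↔ countLT w (w (Fin.last K)) ≤ t := by
  rw [le_orderStat_iff, countLT, countLT, card_filter, card_filter, Fin.sum_univ_castSucc]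
  simp

lemma le_card_filter_countLT_le {n : ℕ} (w : Fin n → ℝ) {m : ℕ} (hm : m < n) :
    m + 1 ≤ #{i | countLT w (w i) ≤ m} := by
  have hq : countLT w (orderStat w ⟨m, hm⟩) ≤ m := (le_orderStat_iff w _ _).1 le_rfl
  have hsub : (Iic ⟨m, hm⟩).map (Tuple.sort w).toEmbedding ⊆
      ({i | countLT w (w i) ≤ m} : Finset _) := by
    intro i hi
    simp only [mem_map_equiv, mem_Iic] at hi
    simpa using (countLT_mono w (Tuple.monotone_sort w hi)).trans hq
  simpa using card_le_card hsub

lemma measurable_countLT_apply {ι : Type*} [Fintype ι] (i : ι) :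
    Measurable fun w : ι → ℝ => countLT w (w i) := by
  simp_rw [countLT, card_filter]
  exact Finset.measurable_sum _ fun j _ =>
    Measurable.ite (measurableSet_lt (measurable_pi_apply j) (measurable_pi_apply i))
      measurable_const measurable_const

lemma max_sub_sub_le_iff {a b y q : ℝ} : max (a - y) (y - b) ≤ q ↔ a - q ≤ y ∧ y ≤ b + q := by
  rw [max_le_iff]
  constructor <;> rintro ⟨h₁, h₂⟩ <;> constructor <;> linarith

section

variable {Ω : Type*} [MeasurableSpace Ω]

lemma natCast_mul_measure_univ_le_sum {ι : Type*} [Fintype ι] (μ : Measure Ω) {A : ι → Set Ω}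
    [∀ ω, DecidablePred (ω ∈ A ·)] (hA : ∀ j, MeasurableSet (A j)) {k : ℕ}
    (hk : ∀ ω, k ≤ #{j | ω ∈ A j}) :
    k * μ Set.univ ≤ ∑ j, μ (A j) := by
  have hcard : ∀ ω, ∑ j, (A j).indicator 1 ω = (#{j | ω ∈ A j} : ℝ≥0∞) := by
    intro ω
    simp [Set.indicator_apply]
  calc (k : ℝ≥0∞) * μ Set.univ = ∫⁻ _, (k : ℝ≥0∞) ∂μ := by simp
    _ ≤ ∫⁻ ω, ∑ j, (A j).indicator 1 ω ∂μ :=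
        lintegral_mono fun ω => (hcard ω).symm ▸ Nat.cast_le.2 (hk ω)
    _ = ∑ j, μ (A j) := by
        rw [lintegral_finsetSum _ fun j _ => measurable_one.indicator (hA j)]
        simp_rw [lintegral_indicator_one (hA _)]

def Exchangeable {ι β : Type*} [MeasurableSpace β] (μ : Measure Ω) (X : ι → Ω → β) : Prop :=
  ∀ σ : Equiv.Perm ι, μ.map (fun ω i => X (σ i) ω) = μ.map (fun ω i => X i ω)

namespace Exchangeable

variable {ι β γ : Type*} [MeasurableSpace β] [MeasurableSpace γ] {μ : Measure Ω} {X : ι → Ω → β}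

lemma comp (hX : Exchangeable μ X) (hXm : ∀ i, Measurable (X i)) {f : β → γ}
    (hf : Measurable f) : Exchangeable μ fun i ω => f (X i ω) := by
  intro σ
  have hF : Measurable fun (g : ι → β) i => f (g i) := by fun_prop
  change μ.map ((fun g i => f (g i)) ∘ fun ω i => X (σ i) ω) =
    μ.map ((fun g i => f (g i)) ∘ fun ω i => X i ω)
  rw [← Measure.map_map hF (by fun_prop), ← Measure.map_map hF (by fun_prop), hX σ]

lemma measure_preimage_perm (hX : Exchangeable μ X) (hXm : ∀ i, Measurable (X i))
    (σ : Equiv.Perm ι) {S : Set (ι → β)} (hS : MeasurableSet S) :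
    μ {ω | (fun i => X (σ i) ω) ∈ S} = μ {ω | (fun i => X i ω) ∈ S} := by
  have := congrArg (· S) (hX σ)
  rwa [Measure.map_apply (by fun_prop) hS, Measure.map_apply (by fun_prop) hS] at this

lemma add_one_le_mul_measure_countLT_le [IsProbabilityMeasure μ] {n : ℕ}
    {W : Fin n → Ω → ℝ} (hW : Exchangeable μ W) (hWm : ∀ i, Measurable (W i)) {m : ℕ}
    (hm : m < n) (i : Fin n) :
    (m + 1 : ℝ≥0∞) ≤ n * μ {ω | countLT (W · ω) (W i ω) ≤ m} := by
  set A : Fin n → Set Ω := fun j => {ω | countLT (W · ω) (W j ω) ≤ m}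
  have hS : ∀ j, MeasurableSet {w : Fin n → ℝ | countLT w (w j) ≤ m} :=
    fun j => measurable_countLT_apply j measurableSet_Iic
  have hA : ∀ j, MeasurableSet (A j) := fun j => measurable_pi_lambda _ hWm (hS j)
  have hA_eq : ∀ j, μ (A j) = μ (A i) := by
    intro j
    refine Eq.trans ?_ (hW.measure_preimage_perm hWm (Equiv.swap j i) (hS i))
    congr! 3 with ω
    simp only [Set.mem_ofPred, Equiv.swap_apply_right]
    rw [← countLT_comp_perm (W · ω) (Equiv.swap j i)]
    rfl
  calc (m + 1 : ℝ≥0∞) = (m + 1 : ℕ) * μ Set.univ := by simp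
    _ ≤ ∑ j, μ (A j) :=
        natCast_mul_measure_univ_le_sum μ hA fun ω => le_card_filter_countLT_le (W · ω) hm
    _ = n * μ (A i) := by simp [hA_eq]

end Exchangeable

end

/-- CQR coverage guarantee (Theorem 1 of the paper in prediction-interval form):
if the pairs `(Z i, Y i)` for `i = 1, …, K+1` are exchangeable, `μlo, μhi` are fixed
measurable functions, the non-conformity scores are
`v i = max (μlo (Z i) − Y i) (Y i − μhi (Z i))`, `α ∈ (0,1)` with `⌈(K+1)(1−α)⌉ ≤ K`,
and `q̂` is the `⌈(K+1)(1−α)⌉`-th order statistic of `v_1, …, v_K`, then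
`ℙ(μlo (Z_{K+1}) − q̂ ≤ Y_{K+1} ∧ Y_{K+1} ≤ μhi (Z_{K+1}) + q̂) ≥ 1 − α`. -/
theorem cqr_coverage
    {Ω E : Type*} [MeasurableSpace Ω] [MeasurableSpace E]
    (μ : Measure Ω) [IsProbabilityMeasure μ]
    (K : ℕ) (hK : 1 ≤ K)
    (X : Fin (K + 1) → Ω → E × ℝ) (hmeas : ∀ i, Measurable (X i))
    (hexch : ∀ σ : Equiv.Perm (Fin (K + 1)),
      Measure.map (fun ω (i : Fin (K + 1)) => X (σ i) ω) μ
        = Measure.map (fun ω (i : Fin (K + 1)) => X i ω) μ)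
    (μlo μhi : E → ℝ) (hμlo : Measurable μlo) (hμhi : Measurable μhi)
    (v : Fin (K + 1) → Ω → ℝ)
    (hv : ∀ i ω, v i ω = max (μlo (X i ω).1 - (X i ω).2) ((X i ω).2 - μhi (X i ω).1))
    (α : ℝ) (hα : α ∈ Set.Ioo (0 : ℝ) 1)
    (hceil : ⌈((K : ℝ) + 1) * (1 - α)⌉₊ ≤ K) :
    1 - α ≤
      (μ {ω |
        μlo (X (Fin.last K) ω).1 -
            orderStat (fun i : Fin K => v i.castSucc ω)
              ⟨⌈((K : ℝ) + 1) * (1 - α)⌉₊ - 1, by omega⟩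
          ≤ (X (Fin.last K) ω).2 ∧
        (X (Fin.last K) ω).2 ≤
          μhi (X (Fin.last K) ω).1 +
            orderStat (fun i : Fin K => v i.castSucc ω)
              ⟨⌈((K : ℝ) + 1) * (1 - α)⌉₊ - 1, by omega⟩}).toReal := by
  set t := ⌈((K : ℝ) + 1) * (1 - α)⌉₊
  have ht : 1 ≤ t := Nat.one_le_ceil_iff.2 (mul_pos (by positivity) (sub_pos.2 hα.2))
  have hscore : Measurable fun p : E × ℝ => max (μlo p.1 - p.2) (p.2 - μhi p.1) := by fun_prop
  have hv_eq : v = fun i ω => max (μlo (X i ω).1 - (X i ω).2) ((X i ω).2 - μhi (X i ω).1) :=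
    funext₂ hv
  have hv_exch : Exchangeable μ v := hv_eq ▸ Exchangeable.comp hexch hmeas hscore
  have hbound := hv_exch.add_one_le_mul_measure_countLT_le
    (fun i => hv_eq ▸ hscore.comp (hmeas i)) (m := t - 1) (by omega) (Fin.last K)
  rw [← Nat.cast_add_one, Nat.sub_add_cancel ht] at hbound
  have hreal := ENNReal.toReal_mono (by finiteness) hbound
  rw [ENNReal.toReal_mul, ENNReal.toReal_natCast, ENNReal.toReal_natCast] at hreal
  push_cast at hreal
  calc 1 - α ≤ (μ {ω | countLT (v · ω) (v (Fin.last K) ω) ≤ t - 1}).toReal := by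
        exact le_of_mul_le_mul_left ((Nat.le_ceil _).trans hreal) (by positivity)
    _ = _ := by
        congr 2
        ext ω
        rw [Set.mem_ofPred, Set.mem_ofPred, ← max_sub_sub_le_iff, ← hv,
          le_orderStat_castSucc_iff (v · ω)]
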